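/- Assume Z_0 := Σ_{ζ∈Λ} ∫ exp(−U(ζ,q)) dμ(q) is finite and positive, fix λ ∈ Λ, and assume 𝕘_a^λ and 𝕘_a are square-integrable for E_a. Then: (i) E_a[𝕟_a^λ] = E_a[𝕘_a^λ] and E_a[𝕟_a] = E_a[𝕘_a]; (ii) the law of total variance gives Var_a[(ζ,q) ↦ 𝕘_a^λ(ζ,q)/E_a[𝕘_a^λ] − 𝕘_a(ζ,q)/E_a[𝕘_a]] = E_a^𝒬[q ↦ Var_a[(ζ,q) ↦ 𝕘_a^λ(ζ,q)/E_a[𝕘_a^λ] − 𝕘_a(ζ,q)/E_a[𝕘_a] | q]] + Var_a[q ↦ 𝕟_a^λ(q)/E_a[𝕟_a^λ] − 𝕟_a(q)/E_a[𝕟_a]]; and (iii) if the expected conditional variance in (ii) is strictly positive, then Var_a[𝕟_a^λ/E_a[𝕟_a^λ] − 𝕟_a/E_a[𝕟_a]] < Var_a[𝕘_a^λ/E_a[𝕘_a^λ] − 𝕘_a/E_a[𝕘_a]]; hence the asymptotic variance of the adiabatic reweighting free energy estimator is strictly smaller than that of the thermodynamic occupation and free energy perturbation estimators. -/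

import Mathlib

open MeasureTheory Real Finset

namespace ExpandedEnsemble

variable {Λ Q : Type*}

/-- Partition function of the expanded ensemble with biasing potential `a`. -/
noncomputable def Za [Fintype Λ] [MeasurableSpace Q] (μ : Measure Q)
    (U : Λ → Q → ℝ) (a : Λ → ℝ) : ℝ :=
  ∑ ζ : Λ, ∫ q, Real.exp (a ζ - U ζ q) ∂μ

/-- Expanded-ensemble probability density `p_a(ζ,q) = exp(a(ζ) − U(ζ,q))/Z_a`. -/
noncomputable def pEE [Fintype Λ] [MeasurableSpace Q] (μ : Measure Q)
    (U : Λ → Q → ℝ) (a : Λ → ℝ) (ζ : Λ) (q : Q) : ℝ :=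
  Real.exp (a ζ - U ζ q) / Za μ U a

/-- Expectation `E_a[F] = Σ_ζ ∫ F(ζ,q) p_a(ζ,q) dμ(q)` in the expanded ensemble. -/
noncomputable def Ea [Fintype Λ] [MeasurableSpace Q] (μ : Measure Q)
    (U : Λ → Q → ℝ) (a : Λ → ℝ) (F : Λ → Q → ℝ) : ℝ :=
  ∑ ζ : Λ, ∫ q, F ζ q * pEE μ U a ζ q ∂μ

/-- Marginal probability of the external parameter, `p_a^Λ(λ) = ∫ p_a(λ,q) dμ(q)`. -/
noncomputable def pLam [Fintype Λ] [MeasurableSpace Q] (μ : Measure Q)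
    (U : Λ → Q → ℝ) (a : Λ → ℝ) (l : Λ) : ℝ :=
  ∫ q, pEE μ U a l q ∂μ

/-- Marginal probability of the configuration, `p_a^𝒬(q) = Σ_ζ p_a(ζ,q)`. -/
noncomputable def pQm [Fintype Λ] [MeasurableSpace Q] (μ : Measure Q)
    (U : Λ → Q → ℝ) (a : Λ → ℝ) (q : Q) : ℝ :=
  ∑ ζ : Λ, pEE μ U a ζ q

/-- Generic weighing function `g_a^λ(ζ,q) = (p_a(λ,q)/p_a(ζ,q)) K(λ,ζ)`. -/
noncomputable def gW [Fintype Λ] [MeasurableSpace Q] (μ : Measure Q)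
    (U : Λ → Q → ℝ) (a : Λ → ℝ) (K : Λ → Λ → ℝ) (l ζ : Λ) (q : Q) : ℝ :=
  (pEE μ U a l q / pEE μ U a ζ q) * K l ζ

/-- Conditional probability of `λ` given `q`:
`π_a^λ(q) = exp(a(λ) − U(λ,q)) / Σ_ζ exp(a(ζ) − U(ζ,q))`. -/
noncomputable def piL [Fintype Λ] (U : Λ → Q → ℝ) (a : Λ → ℝ) (l : Λ) (q : Q) : ℝ :=
  Real.exp (a l - U l q) / ∑ ζ : Λ, Real.exp (a ζ - U ζ q)

/-- Conditional expectation of the observable given `λ`: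
`E[O|λ] = ∫ O(λ,q) π(q|λ) dμ(q)` with `π(q|λ) = p_a(λ,q)/p_a^Λ(λ)`. -/
noncomputable def condE [Fintype Λ] [MeasurableSpace Q] (μ : Measure Q)
    (U : Λ → Q → ℝ) (a : Λ → ℝ) (O : Λ → Q → ℝ) (l : Λ) : ℝ :=
  ∫ q, O l q * (pEE μ U a l q / pLam μ U a l) ∂μ

/-- Variance `Var_a[F] = E_a[F²] − (E_a[F])²`. -/
noncomputable def VarA [Fintype Λ] [MeasurableSpace Q] (μ : Measure Q)
    (U : Λ → Q → ℝ) (a : Λ → ℝ) (F : Λ → Q → ℝ) : ℝ :=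
  Ea μ U a (fun ζ q => F ζ q ^ 2) - (Ea μ U a F) ^ 2

/-- Conditional weight `w_a(ζ,q) = p_a(ζ,q)/p_a^𝒬(q)`. -/
noncomputable def wA [Fintype Λ] [MeasurableSpace Q] (μ : Measure Q)
    (U : Λ → Q → ℝ) (a : Λ → ℝ) (ζ : Λ) (q : Q) : ℝ :=
  pEE μ U a ζ q / pQm μ U a q

/-- Conditional variance of `F` given `q`. -/
noncomputable def condVar [Fintype Λ] [MeasurableSpace Q] (μ : Measure Q)
    (U : Λ → Q → ℝ) (a : Λ → ℝ) (F : Λ → Q → ℝ) (q : Q) : ℝ :=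
  ∑ ζ : Λ, F ζ q ^ 2 * wA μ U a ζ q - (∑ ζ : Λ, F ζ q * wA μ U a ζ q) ^ 2

/-- Expectation with respect to the marginal of `q`: `E_a^𝒬[h] = ∫ h(q) p_a^𝒬(q) dμ(q)`. -/
noncomputable def EQm [Fintype Λ] [MeasurableSpace Q] (μ : Measure Q)
    (U : Λ → Q → ℝ) (a : Λ → ℝ) (h : Q → ℝ) : ℝ :=
  ∫ q, h q * pQm μ U a q ∂μ

/-- Variance with respect to the marginal of `q`. -/
noncomputable def VarQ [Fintype Λ] [MeasurableSpace Q] (μ : Measure Q)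
    (U : Λ → Q → ℝ) (a : Λ → ℝ) (h : Q → ℝ) : ℝ :=
  EQm μ U a (fun q => h q ^ 2) - (EQm μ U a h) ^ 2

/-- Partition function of the unbiased expanded ensemble. -/
noncomputable def Z0 [Fintype Λ] [MeasurableSpace Q] (μ : Measure Q)
    (U : Λ → Q → ℝ) : ℝ :=
  ∑ ζ : Λ, ∫ q, Real.exp (-U ζ q) ∂μ

/-- Unbiased expanded-ensemble density `p_0(ζ,q) = exp(−U(ζ,q))/Z_0`. -/
noncomputable def p0 [Fintype Λ] [MeasurableSpace Q] (μ : Measure Q)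
    (U : Λ → Q → ℝ) (ζ : Λ) (q : Q) : ℝ :=
  Real.exp (-U ζ q) / Z0 μ U

/-- Unbiased total expectation `E[O] = Σ_ζ ∫ O(ζ,q) p_0(ζ,q) dμ(q)`. -/
noncomputable def E0 [Fintype Λ] [MeasurableSpace Q] (μ : Measure Q)
    (U : Λ → Q → ℝ) (O : Λ → Q → ℝ) : ℝ :=
  ∑ ζ : Λ, ∫ q, O ζ q * p0 μ U ζ q ∂μ

/-- Modified generic weighing function `𝕘_a^λ(ζ,q) = exp(−a(λ)) g_a^λ(ζ,q)`. -/
noncomputable def gMod [Fintype Λ] [MeasurableSpace Q] (μ : Measure Q)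
    (U : Λ → Q → ℝ) (a : Λ → ℝ) (K : Λ → Λ → ℝ) (l ζ : Λ) (q : Q) : ℝ :=
  Real.exp (-a l) * gW μ U a K l ζ q

/-- Total modified weighing function `𝕘_a = Σ_λ 𝕘_a^λ`. -/
noncomputable def gModT [Fintype Λ] [MeasurableSpace Q] (μ : Measure Q)
    (U : Λ → Q → ℝ) (a : Λ → ℝ) (K : Λ → Λ → ℝ) (ζ : Λ) (q : Q) : ℝ :=
  ∑ l : Λ, gMod μ U a K l ζ q

/-- Conditioned modified weighing function
`𝕟_a^λ(q) = exp(−U(λ,q)) / Σ_ζ exp(a(ζ) − U(ζ,q))`. -/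
noncomputable def nMod [Fintype Λ] (U : Λ → Q → ℝ) (a : Λ → ℝ) (l : Λ) (q : Q) : ℝ :=
  Real.exp (-U l q) / ∑ ζ : Λ, Real.exp (a ζ - U ζ q)

/-- Total conditioned modified weighing function `𝕟_a = Σ_λ 𝕟_a^λ`. -/
noncomputable def nModT [Fintype Λ] (U : Λ → Q → ℝ) (a : Λ → ℝ) (q : Q) : ℝ :=
  ∑ l : Λ, nMod U a l q

end ExpandedEnsemble

/-!
Everything is obtained by conditioning on the configuration `q`. Given `q`, the parameter `ζ`
follows the finite law `w_a(·, q)`, and because `Σ_ζ K(λ, ζ) = 1` the conditional mean of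
`𝕘_a^λ` is exactly `𝕟_a^λ(q)`. The tower property then gives (i), the law of total variance
for this finite conditional law gives (ii), and (iii) follows from (ii).
-/

theorem integrable_sq_div_sub_div_mul {Q : Type*} [MeasurableSpace Q] {μ : Measure Q}
    {f g w : Q → ℝ} (c d : ℝ) (hf : Measurable f) (hg : Measurable g) (hw : Measurable w)
    (hw0 : ∀ q, 0 ≤ w q) (hfi : Integrable (fun q => f q ^ 2 * w q) μ)
    (hgi : Integrable (fun q => g q ^ 2 * w q) μ) :
    Integrable (fun q => (f q / c - g q / d) ^ 2 * w q) μ := by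
  refine ((hfi.const_mul (2 / c ^ 2)).add (hgi.const_mul (2 / d ^ 2))).mono'
    ((((hf.div_const c).sub (hg.div_const d)).pow_const 2).mul hw).aestronglyMeasurable
    (ae_of_all _ fun q => ?_)
  rw [Real.norm_of_nonneg (mul_nonneg (sq_nonneg _) (hw0 q))]
  calc (f q / c - g q / d) ^ 2 * w q
      ≤ (2 * (f q / c) ^ 2 + 2 * (g q / d) ^ 2) * w q :=
        mul_le_mul_of_nonneg_right (by nlinarith [sq_nonneg (f q / c + g q / d)]) (hw0 q)
    _ = 2 / c ^ 2 * (f q ^ 2 * w q) + 2 / d ^ 2 * (g q ^ 2 * w q) := by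
        rw [div_pow, div_pow]; ring

namespace ExpandedEnsemble

variable {Λ Q : Type*} [Fintype Λ] [MeasurableSpace Q] {μ : Measure Q}
  {U : Λ → Q → ℝ} {a : Λ → ℝ}

noncomputable def condMean (μ : Measure Q) (U : Λ → Q → ℝ) (a : Λ → ℝ) (F : Λ → Q → ℝ)
    (q : Q) : ℝ :=
  ∑ ζ : Λ, F ζ q * wA μ U a ζ q

theorem pEE_pos (hZ : 0 < Za μ U a) (ζ : Λ) (q : Q) : 0 < pEE μ U a ζ q :=
  div_pos (exp_pos _) hZ

theorem pQm_pos [Nonempty Λ] (hZ : 0 < Za μ U a) (q : Q) : 0 < pQm μ U a q :=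
  sum_pos (fun ζ _ => pEE_pos hZ ζ q) univ_nonempty

theorem pEE_le_pQm (hZ : 0 < Za μ U a) (ζ : Λ) (q : Q) : pEE μ U a ζ q ≤ pQm μ U a q :=
  single_le_sum (f := fun η => pEE μ U a η q) (fun η _ => (pEE_pos hZ η q).le) (mem_univ ζ)

theorem measurable_pEE (hU : ∀ ζ, Measurable (U ζ)) (ζ : Λ) : Measurable (pEE μ U a ζ) :=
  (measurable_const.sub (hU ζ)).exp.div_const _

theorem measurable_pQm (hU : ∀ ζ, Measurable (U ζ)) : Measurable (pQm μ U a) :=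
  Finset.measurable_sum _ fun ζ _ => measurable_pEE hU ζ

theorem sum_wA [Nonempty Λ] (hZ : 0 < Za μ U a) (q : Q) : ∑ ζ : Λ, wA μ U a ζ q = 1 := by
  simp only [wA, ← sum_div]
  exact div_self (pQm_pos hZ q).ne'

theorem condMean_mul_pQm [Nonempty Λ] (hZ : 0 < Za μ U a) (F : Λ → Q → ℝ) (q : Q) :
    condMean μ U a F q * pQm μ U a q = ∑ ζ : Λ, F ζ q * pEE μ U a ζ q := by
  have := (pQm_pos hZ q).ne'
  simp only [condMean, wA, sum_mul]
  exact sum_congr rfl fun ζ _ => by field_simp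

theorem condMean_const [Nonempty Λ] (hZ : 0 < Za μ U a) (h : Q → ℝ) (q : Q) :
    condMean μ U a (fun _ => h) q = h q := by
  rw [condMean, ← mul_sum, sum_wA hZ, mul_one]

theorem condMean_sum {ι : Type*} (s : Finset ι) (F : ι → Λ → Q → ℝ) (q : Q) :
    condMean μ U a (fun ζ q => ∑ i ∈ s, F i ζ q) q = ∑ i ∈ s, condMean μ U a (F i) q := by
  simp only [condMean, sum_mul]
  exact sum_comm

theorem condMean_div_sub_div (F G : Λ → Q → ℝ) (c d : ℝ) (q : Q) :
    condMean μ U a (fun ζ q => F ζ q / c - G ζ q / d) q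
      = condMean μ U a F q / c - condMean μ U a G q / d := by
  simp only [condMean, sub_mul, sum_sub_distrib, div_mul_eq_mul_div, ← sum_div]

theorem sq_condMean_le [Nonempty Λ] (hZ : 0 < Za μ U a) (F : Λ → Q → ℝ) (q : Q) :
    condMean μ U a F q ^ 2 ≤ condMean μ U a (fun ζ q => F ζ q ^ 2) q := by
  have hw0 : ∀ ζ ∈ univ, 0 ≤ wA μ U a ζ q := fun ζ _ =>
    div_nonneg (pEE_pos hZ ζ q).le (pQm_pos hZ q).le
  have := (even_two.convexOn_pow (𝕜 := ℝ)).map_sum_le hw0 (sum_wA hZ q)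
    (fun ζ _ => Set.mem_univ (F ζ q))
  simpa only [condMean, smul_eq_mul, mul_comm] using this

theorem condVar_eq (F : Λ → Q → ℝ) (q : Q) :
    condVar μ U a F q = condMean μ U a (fun ζ q => F ζ q ^ 2) q - condMean μ U a F q ^ 2 :=
  rfl

theorem measurable_condMean (hU : ∀ ζ, Measurable (U ζ)) {F : Λ → Q → ℝ}
    (hF : ∀ ζ, Measurable (F ζ)) : Measurable (condMean μ U a F) :=
  Finset.measurable_sum _ fun ζ _ => (hF ζ).mul ((measurable_pEE hU ζ).div (measurable_pQm hU))

theorem integrable_condMean_mul_pQm [Nonempty Λ] (hZ : 0 < Za μ U a) {F : Λ → Q → ℝ}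
    (hF1 : ∀ ζ, Integrable (fun q => F ζ q * pEE μ U a ζ q) μ) :
    Integrable (fun q => condMean μ U a F q * pQm μ U a q) μ :=
  (integrable_finsetSum univ fun ζ _ => hF1 ζ).congr
    (ae_of_all _ fun q => (condMean_mul_pQm hZ F q).symm)

theorem integrable_sq_condMean_mul_pQm [Nonempty Λ] (hU : ∀ ζ, Measurable (U ζ))
    (hZ : 0 < Za μ U a) {F : Λ → Q → ℝ} (hF : ∀ ζ, Measurable (F ζ))
    (hF2 : ∀ ζ, Integrable (fun q => F ζ q ^ 2 * pEE μ U a ζ q) μ) :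
    Integrable (fun q => condMean μ U a F q ^ 2 * pQm μ U a q) μ :=
  (integrable_condMean_mul_pQm hZ hF2).mono'
    (((measurable_condMean hU hF).pow_const 2).mul (measurable_pQm hU)).aestronglyMeasurable
    (ae_of_all _ fun q => by
      rw [Real.norm_of_nonneg (mul_nonneg (sq_nonneg _) (pQm_pos hZ q).le)]
      exact mul_le_mul_of_nonneg_right (sq_condMean_le hZ F q) (pQm_pos hZ q).le)

theorem integrable_mul_pEE_of_integrable_mul_pQm (hU : ∀ ζ, Measurable (U ζ))
    (hZ : 0 < Za μ U a) {h : Q → ℝ} (hh : AEStronglyMeasurable h μ)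
    (hi : Integrable (fun q => h q * pQm μ U a q) μ) (ζ : Λ) :
    Integrable (fun q => h q * pEE μ U a ζ q) μ :=
  hi.mono (hh.mul (measurable_pEE hU ζ).aestronglyMeasurable) (ae_of_all _ fun q => by
    simp only [norm_mul, Real.norm_of_nonneg (pEE_pos hZ ζ q).le,
      Real.norm_of_nonneg ((pEE_pos hZ ζ q).le.trans (pEE_le_pQm hZ ζ q))]
    exact mul_le_mul_of_nonneg_left (pEE_le_pQm hZ ζ q) (norm_nonneg _))

theorem Ea_eq_EQm_condMean [Nonempty Λ] (hZ : 0 < Za μ U a) {F : Λ → Q → ℝ}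
    (hF1 : ∀ ζ, Integrable (fun q => F ζ q * pEE μ U a ζ q) μ) :
    Ea μ U a F = EQm μ U a (condMean μ U a F) := by
  rw [Ea, EQm, ← integral_finsetSum univ fun ζ _ => hF1 ζ]
  exact integral_congr_ae (ae_of_all _ fun q => (condMean_mul_pQm hZ F q).symm)

theorem Ea_const_eq_EQm [Nonempty Λ] (hU : ∀ ζ, Measurable (U ζ)) (hZ : 0 < Za μ U a)
    {h : Q → ℝ} (hh : AEStronglyMeasurable h μ) (hi : Integrable (fun q => h q * pQm μ U a q) μ) :
    Ea μ U a (fun _ => h) = EQm μ U a h := by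
  rw [Ea_eq_EQm_condMean hZ (integrable_mul_pEE_of_integrable_mul_pQm hU hZ hh hi)]
  exact congrArg (EQm μ U a) (funext (condMean_const hZ h))

theorem Ea_condMean [Nonempty Λ] (hU : ∀ ζ, Measurable (U ζ)) (hZ : 0 < Za μ U a)
    {F : Λ → Q → ℝ} (hF : ∀ ζ, Measurable (F ζ))
    (hF1 : ∀ ζ, Integrable (fun q => F ζ q * pEE μ U a ζ q) μ) :
    Ea μ U a (fun _ => condMean μ U a F) = Ea μ U a F := by
  rw [Ea_const_eq_EQm hU hZ (measurable_condMean hU hF).aestronglyMeasurable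
    (integrable_condMean_mul_pQm hZ hF1), Ea_eq_EQm_condMean hZ hF1]

theorem VarA_const_eq_VarQ [Nonempty Λ] (hU : ∀ ζ, Measurable (U ζ)) (hZ : 0 < Za μ U a)
    {h : Q → ℝ} (hh : AEStronglyMeasurable h μ) (hi : Integrable (fun q => h q * pQm μ U a q) μ)
    (hi2 : Integrable (fun q => h q ^ 2 * pQm μ U a q) μ) :
    VarA μ U a (fun _ => h) = VarQ μ U a h := by
  rw [VarA, VarQ, Ea_const_eq_EQm hU hZ hh hi,
    ← Ea_const_eq_EQm hU hZ (h := fun q => h q ^ 2) (hh.pow 2) hi2]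

theorem VarA_eq_EQm_condVar_add_VarQ [Nonempty Λ] (hU : ∀ ζ, Measurable (U ζ))
    (hZ : 0 < Za μ U a) {F : Λ → Q → ℝ} (hF : ∀ ζ, Measurable (F ζ))
    (hF1 : ∀ ζ, Integrable (fun q => F ζ q * pEE μ U a ζ q) μ)
    (hF2 : ∀ ζ, Integrable (fun q => F ζ q ^ 2 * pEE μ U a ζ q) μ) :
    VarA μ U a F = EQm μ U a (condVar μ U a F) + VarQ μ U a (condMean μ U a F) := by
  have hEQm : EQm μ U a (condVar μ U a F) = EQm μ U a (condMean μ U a (fun ζ q => F ζ q ^ 2))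
      - EQm μ U a (fun q => condMean μ U a F q ^ 2) := by
    rw [EQm, EQm, EQm, ← integral_sub (integrable_condMean_mul_pQm hZ hF2)
      (integrable_sq_condMean_mul_pQm hU hZ hF hF2)]
    simp only [condVar_eq, sub_mul]
  rw [VarA, VarQ, Ea_eq_EQm_condMean hZ hF2, Ea_eq_EQm_condMean hZ hF1, hEQm]
  ring

theorem gMod_mul_pEE (hZ : 0 < Za μ U a) (K : Λ → Λ → ℝ) (l ζ : Λ) (q : Q) :
    gMod μ U a K l ζ q * pEE μ U a ζ q = exp (-U l q) / Za μ U a * K l ζ := by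
  have := (pEE_pos hZ ζ q).ne'
  rw [gMod, gW, pEE, pEE, show -U l q = -a l + (a l - U l q) by ring, exp_add]
  field_simp

theorem nMod_mul_pQm [Nonempty Λ] (l : Λ) (q : Q) :
    nMod U a l q * pQm μ U a q = exp (-U l q) / Za μ U a := by
  have := (sum_pos (fun ζ _ => exp_pos (a ζ - U ζ q)) univ_nonempty).ne'
  rw [nMod, pQm]
  simp only [pEE, ← sum_div]
  field_simp

theorem condMean_gMod [Nonempty Λ] (hZ : 0 < Za μ U a) {K : Λ → Λ → ℝ}
    (hK : ∀ l : Λ, ∑ ζ : Λ, K l ζ = 1) (l : Λ) (q : Q) :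
    condMean μ U a (gMod μ U a K l) q = nMod U a l q := by
  refine mul_right_cancel₀ (pQm_pos hZ q).ne' ?_
  rw [condMean_mul_pQm hZ, nMod_mul_pQm]
  simp only [gMod_mul_pEE hZ, ← mul_sum, hK, mul_one]

theorem condMean_gModT [Nonempty Λ] (hZ : 0 < Za μ U a) {K : Λ → Λ → ℝ}
    (hK : ∀ l : Λ, ∑ ζ : Λ, K l ζ = 1) (q : Q) :
    condMean μ U a (gModT μ U a K) q = nModT U a q :=
  (condMean_sum univ _ q).trans (sum_congr rfl fun l _ => condMean_gMod hZ hK l q)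

theorem measurable_gMod (hU : ∀ ζ, Measurable (U ζ)) (K : Λ → Λ → ℝ) (l ζ : Λ) :
    Measurable (gMod μ U a K l ζ) :=
  (((measurable_pEE hU l).div (measurable_pEE hU ζ)).mul_const _).const_mul _

theorem measurable_gModT (hU : ∀ ζ, Measurable (U ζ)) (K : Λ → Λ → ℝ) (ζ : Λ) :
    Measurable (gModT μ U a K ζ) :=
  Finset.measurable_sum _ fun l _ => measurable_gMod hU K l ζ

theorem integrable_gMod_mul_pEE (hZ : 0 < Za μ U a) (K : Λ → Λ → ℝ) {l : Λ}
    (hInt0 : Integrable (fun q => exp (-U l q)) μ) (ζ : Λ) :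
    Integrable (fun q => gMod μ U a K l ζ q * pEE μ U a ζ q) μ :=
  ((hInt0.div_const _).mul_const (K l ζ)).congr
    (ae_of_all _ fun q => (gMod_mul_pEE hZ K l ζ q).symm)

theorem integrable_gModT_mul_pEE (hZ : 0 < Za μ U a) (K : Λ → Λ → ℝ)
    (hInt0 : ∀ l, Integrable (fun q => exp (-U l q)) μ) (ζ : Λ) :
    Integrable (fun q => gModT μ U a K ζ q * pEE μ U a ζ q) μ := by
  simp only [gModT, sum_mul]
  exact integrable_finsetSum univ fun l _ => integrable_gMod_mul_pEE hZ K (hInt0 l) ζ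

end ExpandedEnsemble

open MeasureTheory ExpandedEnsemble

theorem variance_reduction_free_energy_general
    {Λ Q : Type*} [Fintype Λ] [Nonempty Λ] [MeasurableSpace Q]
    (μ : Measure Q)
    (U : Λ → Q → ℝ) (hU : ∀ ζ, Measurable (U ζ)) (a : Λ → ℝ)
    (hZ : 0 < Za μ U a)
    (hInt0 : ∀ ζ, Integrable (fun q => Real.exp (-U ζ q)) μ)
    (K : Λ → Λ → ℝ) (hK : ∀ l : Λ, ∑ ζ : Λ, K l ζ = 1)
    (l : Λ)
    (hsq1 : ∀ ζ, Integrable (fun q => gMod μ U a K l ζ q ^ 2 * pEE μ U a ζ q) μ)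
    (hsq2 : ∀ ζ, Integrable (fun q => gModT μ U a K ζ q ^ 2 * pEE μ U a ζ q) μ) :
    (Ea μ U a (fun _ q => nMod U a l q) = Ea μ U a (gMod μ U a K l)
      ∧ Ea μ U a (fun _ q => nModT U a q) = Ea μ U a (gModT μ U a K))
    ∧ VarA μ U a (fun ζ q =>
          gMod μ U a K l ζ q / Ea μ U a (gMod μ U a K l)
            - gModT μ U a K ζ q / Ea μ U a (gModT μ U a K))
        = EQm μ U a (condVar μ U a (fun ζ q =>
            gMod μ U a K l ζ q / Ea μ U a (gMod μ U a K l)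
              - gModT μ U a K ζ q / Ea μ U a (gModT μ U a K)))
          + VarA μ U a (fun _ q =>
              nMod U a l q / Ea μ U a (fun _ q' => nMod U a l q')
                - nModT U a q / Ea μ U a (fun _ q' => nModT U a q'))
    ∧ (0 < EQm μ U a (condVar μ U a (fun ζ q =>
            gMod μ U a K l ζ q / Ea μ U a (gMod μ U a K l)
              - gModT μ U a K ζ q / Ea μ U a (gModT μ U a K))) →
        VarA μ U a (fun _ q =>
            nMod U a l q / Ea μ U a (fun _ q' => nMod U a l q')
              - nModT U a q / Ea μ U a (fun _ q' => nModT U a q'))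
          < VarA μ U a (fun ζ q =>
              gMod μ U a K l ζ q / Ea μ U a (gMod μ U a K l)
                - gModT μ U a K ζ q / Ea μ U a (gModT μ U a K))) := by
  have hg := integrable_gMod_mul_pEE hZ K (hInt0 l)
  have hgT := integrable_gModT_mul_pEE hZ K hInt0
  have hmean : Ea μ U a (fun _ q => nMod U a l q) = Ea μ U a (gMod μ U a K l) := by
    simp only [← condMean_gMod hZ hK l]
    exact Ea_condMean hU hZ (measurable_gMod hU K l) hg
  have hmeanT : Ea μ U a (fun _ q => nModT U a q) = Ea μ U a (gModT μ U a K) := by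
    simp only [← condMean_gModT hZ hK]
    exact Ea_condMean hU hZ (measurable_gModT hU K) hgT
  rw [hmean, hmeanT]
  set c := Ea μ U a (gMod μ U a K l)
  set cT := Ea μ U a (gModT μ U a K)
  set F : Λ → Q → ℝ := fun ζ q => gMod μ U a K l ζ q / c - gModT μ U a K ζ q / cT
  have hF : ∀ ζ, Measurable (F ζ) := fun ζ =>
    ((measurable_gMod hU K l ζ).div_const c).sub ((measurable_gModT hU K ζ).div_const cT)
  have hF1 : ∀ ζ, Integrable (fun q => F ζ q * pEE μ U a ζ q) μ := fun ζ =>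
    (((hg ζ).div_const c).sub ((hgT ζ).div_const cT)).congr
      (ae_of_all _ fun q => by simp only [F, Pi.sub_apply]; ring)
  have hF2 : ∀ ζ, Integrable (fun q => F ζ q ^ 2 * pEE μ U a ζ q) μ := fun ζ =>
    integrable_sq_div_sub_div_mul c cT (measurable_gMod hU K l ζ) (measurable_gModT hU K ζ)
      (measurable_pEE hU ζ) (fun q => (pEE_pos hZ ζ q).le) (hsq1 ζ) (hsq2 ζ)
  have hcond : (fun (_ : Λ) q => nMod U a l q / c - nModT U a q / cT)
      = fun _ => condMean μ U a F := by
    ext _ q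
    rw [condMean_div_sub_div, condMean_gMod hZ hK, condMean_gModT hZ hK]
  have htotal := VarA_eq_EQm_condVar_add_VarQ hU hZ hF hF1 hF2
  rw [hcond, VarA_const_eq_VarQ hU hZ (measurable_condMean hU hF).aestronglyMeasurable
    (integrable_condMean_mul_pQm hZ hF1) (integrable_sq_condMean_mul_pQm hU hZ hF hF2)]
  exact ⟨⟨rfl, rfl⟩, htotal, fun hpos => by linarith⟩

/-- **Variance reduction for free energy estimation.**  (i) `E_a[𝕟_a^λ] = E_a[𝕘_a^λ]`
and `E_a[𝕟_a] = E_a[𝕘_a]`; (ii) the law of total variance for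
`𝕘_a^λ/E_a[𝕘_a^λ] − 𝕘_a/E_a[𝕘_a]`; (iii) if the expected conditional variance is
positive, the asymptotic variance of the adiabatic reweighting free energy estimator
is strictly smaller than that of the thermodynamic occupation and free energy
perturbation estimators. -/
theorem variance_reduction_free_energy
    {Λ Q : Type*} [Fintype Λ] [Nonempty Λ] [MeasurableSpace Q]
    (μ : Measure Q) [SigmaFinite μ]
    (U : Λ → Q → ℝ) (hU : ∀ ζ, Measurable (U ζ)) (a : Λ → ℝ)
    (hInt : ∀ ζ, Integrable (fun q => Real.exp (a ζ - U ζ q)) μ)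
    (hZ : 0 < Za μ U a)
    (hInt0 : ∀ ζ, Integrable (fun q => Real.exp (-U ζ q)) μ)
    (hZ0 : 0 < Z0 μ U)
    (K : Λ → Λ → ℝ) (hK : ∀ l : Λ, ∑ ζ : Λ, K l ζ = 1)
    (l : Λ)
    (hsq1 : ∀ ζ, Integrable (fun q => gMod μ U a K l ζ q ^ 2 * pEE μ U a ζ q) μ)
    (hsq2 : ∀ ζ, Integrable (fun q => gModT μ U a K ζ q ^ 2 * pEE μ U a ζ q) μ) :
    (Ea μ U a (fun _ q => nMod U a l q) = Ea μ U a (gMod μ U a K l)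
      ∧ Ea μ U a (fun _ q => nModT U a q) = Ea μ U a (gModT μ U a K))
    ∧ VarA μ U a (fun ζ q =>
          gMod μ U a K l ζ q / Ea μ U a (gMod μ U a K l)
            - gModT μ U a K ζ q / Ea μ U a (gModT μ U a K))
        = EQm μ U a (condVar μ U a (fun ζ q =>
            gMod μ U a K l ζ q / Ea μ U a (gMod μ U a K l)
              - gModT μ U a K ζ q / Ea μ U a (gModT μ U a K)))
          + VarA μ U a (fun _ q =>
              nMod U a l q / Ea μ U a (fun _ q' => nMod U a l q')
                - nModT U a q / Ea μ U a (fun _ q' => nModT U a q'))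
    ∧ (0 < EQm μ U a (condVar μ U a (fun ζ q =>
            gMod μ U a K l ζ q / Ea μ U a (gMod μ U a K l)
              - gModT μ U a K ζ q / Ea μ U a (gModT μ U a K))) →
        VarA μ U a (fun _ q =>
            nMod U a l q / Ea μ U a (fun _ q' => nMod U a l q')
              - nModT U a q / Ea μ U a (fun _ q' => nModT U a q'))
          < VarA μ U a (fun ζ q =>
              gMod μ U a K l ζ q / Ea μ U a (gMod μ U a K l)
                - gModT μ U a K ζ q / Ea μ U a (gModT μ U a K))) :=
  variance_reduction_free_energy_general μ U hU a hZ hInt0 K hK l hsq1 hsq2
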